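/- arXiv:2601.18173 — 4 statements merged into one kernel-verified Lean document; each statement's English description precedes it below -/
import Mathlib

section
/- Let π ∈ S_n, 2 ≤ i ≤ n−1, with a = π(i−1), b = π(i), c = π(i+1). The number of vertices of degree 4 in column i of the grid graph G_π equals max{0, min(a, c, b−1) − 1}. -/
/-- `π` is a permutation of `{1,…,n}` (viewed as a function `ℕ → ℕ`). -/
def IsPermOn (n : ℕ) (π : ℕ → ℕ) : Prop :=
  Set.BijOn π (Set.Icc 1 n) (Set.Icc 1 n)

/-- `(i,j)` is a vertex of the grid graph of `π`. -/
def inGrid (n : ℕ) (π : ℕ → ℕ) (v : ℕ × ℕ) : Prop :=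
  1 ≤ v.1 ∧ v.1 ≤ n ∧ 1 ≤ v.2 ∧ v.2 ≤ π v.1

/-- Adjacency in the grid graph `G_π`. -/
def gridAdj (n : ℕ) (π : ℕ → ℕ) (v w : ℕ × ℕ) : Prop :=
  inGrid n π v ∧ inGrid n π w ∧
    ((v.1 = w.1 ∧ (v.2 + 1 = w.2 ∨ w.2 + 1 = v.2)) ∨
     (v.2 = w.2 ∧ (v.1 + 1 = w.1 ∨ w.1 + 1 = v.1)))

/-- The grid graph `G_π` as a simple graph on `ℕ × ℕ`. -/
def gridGraph (n : ℕ) (π : ℕ → ℕ) : SimpleGraph (ℕ × ℕ) where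
  Adj := gridAdj n π
  symm := by
    constructor
    intro v w h
    unfold gridAdj at *
    tauto
  loopless := by
    constructor
    intro v h
    unfold gridAdj inGrid at h
    omega

/-- Degree of a vertex in the grid graph. -/
noncomputable def gridDeg (n : ℕ) (π : ℕ → ℕ) (v : ℕ × ℕ) : ℕ :=
  Nat.card {w : ℕ × ℕ // gridAdj n π v w}

/-- The vertex set of the grid graph, as a finset. -/
def vertFinset (n : ℕ) (π : ℕ → ℕ) : Finset (ℕ × ℕ) :=
  (Finset.Icc 1 n ×ˢ Finset.Icc 1 n).filter (fun v => v.2 ≤ π v.1)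

/-- Lower endpoints of vertical edges of the grid graph. -/
def vertEdgeFinset (n : ℕ) (π : ℕ → ℕ) : Finset (ℕ × ℕ) :=
  (Finset.Icc 1 n ×ˢ Finset.Icc 1 n).filter (fun v => v.2 + 1 ≤ π v.1)

/-- The horizontal-edge statistic `H(π) = Σ_{t=1}^{n-1} min(π t, π (t+1))`. -/
def Hstat (n : ℕ) (π : ℕ → ℕ) : ℕ :=
  ∑ t ∈ Finset.Icc 1 (n - 1), min (π t) (π (t + 1))

/-!
A vertex `(i, s)` with `i ≥ 1` has degree `4` exactly when its four lattice neighbours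
`(i, s ± 1)`, `(i ± 1, s)` all lie in `G_π`. In an internal column this means
`2 ≤ s ≤ π i - 1`, `s ≤ π (i - 1)` and `s ≤ π (i + 1)`, so the degree-`4` vertices of column `i`
are the levels `2, …, min (π (i - 1)) (π (i + 1)) (π i - 1)`.
-/

def gridNbhd (v : ℕ × ℕ) : Finset (ℕ × ℕ) :=
  {(v.1, v.2 + 1), (v.1, v.2 - 1), (v.1 - 1, v.2), (v.1 + 1, v.2)}

section GridDegree

variable {n : ℕ} {π : ℕ → ℕ}

lemma mem_gridNbhd_of_gridAdj {v w : ℕ × ℕ} (h : gridAdj n π v w) : w ∈ gridNbhd v := by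
  obtain ⟨v1, v2⟩ := v
  obtain ⟨w1, w2⟩ := w
  obtain ⟨-, -, hstep⟩ := h
  simp only [gridNbhd, Finset.mem_insert, Finset.mem_singleton, Prod.mk.injEq]
  omega

lemma card_gridNbhd {v : ℕ × ℕ} (hv : 1 ≤ v.1) : (gridNbhd v).card = 4 := by
  obtain ⟨a, b⟩ := v
  rw [gridNbhd, Finset.card_insert_of_notMem, Finset.card_insert_of_notMem,
    Finset.card_pair] <;>
  simp only [Finset.mem_insert, Finset.mem_singleton, Prod.mk.injEq, ne_eq] <;> omega

open scoped Classical in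
lemma gridDeg_eq_card_filter_gridNbhd (v : ℕ × ℕ) :
    gridDeg n π v = ((gridNbhd v).filter (gridAdj n π v)).card := by
  rw [gridDeg, ← Nat.card_eq_finsetCard]
  exact Nat.card_congr
    { toFun := fun w => ⟨w.1, Finset.mem_filter.2 ⟨mem_gridNbhd_of_gridAdj w.2, w.2⟩⟩
      invFun := fun w => ⟨w.1, (Finset.mem_filter.1 w.2).2⟩ }

lemma gridDeg_eq_four_iff {v : ℕ × ℕ} (hv : 1 ≤ v.1) :
    gridDeg n π v = 4 ↔ ∀ w ∈ gridNbhd v, gridAdj n π v w := by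
  classical
  rw [gridDeg_eq_card_filter_gridNbhd, ← card_gridNbhd hv, Finset.card_filter_eq_iff]

lemma gridDeg_eq_four_iff_of_internal_column {i s : ℕ} (hi : 2 ≤ i) (hin : i + 1 ≤ n) :
    gridDeg n π (i, s) = 4 ↔ 2 ≤ s ∧ s ≤ min (π (i - 1)) (min (π (i + 1)) (π i - 1)) := by
  simp only [gridDeg_eq_four_iff (v := (i, s)) (by omega), gridNbhd,
    Finset.mem_insert, Finset.mem_singleton, forall_eq_or_imp, forall_eq, gridAdj, inGrid,
    true_and, true_or, and_true, or_true]
  omega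

end GridDegree

theorem grid_deg4_in_column_general (n : ℕ) (π : ℕ → ℕ)
    (i : ℕ) (hi2 : 2 ≤ i) (hin : i + 1 ≤ n) :
    ((Finset.Icc 1 (π i)).filter (fun s => gridDeg n π (i, s) = 4)).card =
      min (π (i - 1)) (min (π (i + 1)) (π i - 1)) - 1 := by
  have hcolumn : (Finset.Icc 1 (π i)).filter (fun s => gridDeg n π (i, s) = 4) =
      Finset.Icc 2 (min (π (i - 1)) (min (π (i + 1)) (π i - 1))) := by
    ext s
    simp only [Finset.mem_filter, Finset.mem_Icc,
      gridDeg_eq_four_iff_of_internal_column hi2 hin]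
    omega
  rw [hcolumn, Nat.card_Icc]
  omega

/-- The number of degree-4 vertices in an internal column `i` equals
`max{0, min(a, c, b-1) - 1}` where `a = π(i-1)`, `b = π(i)`, `c = π(i+1)`
(the `max{0,·}` is realized by truncated subtraction on `ℕ`). -/
theorem grid_deg4_in_column (n : ℕ) (π : ℕ → ℕ) (hπ : IsPermOn n π)
    (i : ℕ) (hi2 : 2 ≤ i) (hin : i + 1 ≤ n) :
    ((Finset.Icc 1 (π i)).filter (fun s => gridDeg n π (i, s) = 4)).card =
      min (π (i - 1)) (min (π (i + 1)) (π i - 1)) - 1 :=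
  grid_deg4_in_column_general n π i hi2 hin
end

section
/- For π ∈ S_n with n ≥ 2, the number of degree-1 vertices of G_π lying in the first column equals 𝟙{π(1)=1} + 𝟙{π(1)>π(2)}, and the number in the last column equals 𝟙{π(n)=1} + 𝟙{π(n−1)<π(n)}. -/
/-! A vertex `(i, s)` of `G_π` can only be adjacent to `(i, s ± 1)` and `(i ± 1, s)`, so its degree
is a sum of four indicators. In an exterior column of height `a` beside a column of height `b ≥ 1`
one of them vanishes, leaving `[2 ≤ s] + [s < a] + [s ≤ b]`. The bottom vertex always sees the
neighbouring column, so it has degree one exactly when `a = 1`; any other vertex has degree one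
exactly when it is the top one and sticks out of the neighbouring column, `s = a > b`. -/

open Finset

section

variable {n : ℕ} {π : ℕ → ℕ}

theorem gridDeg_eq {i s : ℕ} (hv : inGrid n π (i, s)) :
    gridDeg n π (i, s) =
      (if 2 ≤ s then 1 else 0) + (if s + 1 ≤ π i then 1 else 0) +
        (if 2 ≤ i ∧ s ≤ π (i - 1) then 1 else 0) +
        (if i + 1 ≤ n ∧ s ≤ π (i + 1) then 1 else 0) := by
  classical
  obtain ⟨hi, hin, hs, hsπ⟩ : 1 ≤ i ∧ i ≤ n ∧ 1 ≤ s ∧ s ≤ π i := hv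
  let nbhd : Finset (ℕ × ℕ) := {(i, s - 1), (i, s + 1), (i - 1, s), (i + 1, s)}
  have hadj : {w | gridAdj n π (i, s) w} = ↑(nbhd.filter (gridAdj n π (i, s))) := by
    ext ⟨a, b⟩
    simp only [Set.mem_ofPred_eq, coe_filter, nbhd, mem_insert, mem_singleton, Prod.mk.injEq]
    exact ⟨fun h => ⟨by obtain ⟨-, -, h⟩ := h; omega, h⟩, And.right⟩
  change Nat.card {w | gridAdj n π (i, s) w} = _
  rw [hadj, Nat.card_coe_set_eq, Set.ncard_coe_finset, card_filter,
    sum_insert (by simp only [mem_insert, mem_singleton, Prod.mk.injEq]; omega),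
    sum_insert (by simp), sum_insert (by simp), sum_singleton]
  have below : gridAdj n π (i, s) (i, s - 1) ↔ 2 ≤ s := by
    grind [gridAdj, inGrid]
  have above : gridAdj n π (i, s) (i, s + 1) ↔ s + 1 ≤ π i := by
    grind [gridAdj, inGrid]
  have left : gridAdj n π (i, s) (i - 1, s) ↔ 2 ≤ i ∧ s ≤ π (i - 1) := by
    grind [gridAdj, inGrid]
  have right : gridAdj n π (i, s) (i + 1, s) ↔ i + 1 ≤ n ∧ s ≤ π (i + 1) := by
    grind [gridAdj, inGrid]
  simp only [below, above, left, right]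
  omega

theorem gridDeg_first_column (hn : 2 ≤ n) {s : ℕ} (hs : s ∈ Icc 1 (π 1)) :
    gridDeg n π (1, s) =
      (if 2 ≤ s then 1 else 0) + (if s + 1 ≤ π 1 then 1 else 0) + (if s ≤ π 2 then 1 else 0) := by
  rw [gridDeg_eq ⟨le_rfl, by omega, (mem_Icc.1 hs).1, (mem_Icc.1 hs).2⟩]
  simp [hn]

theorem gridDeg_last_column (hn : 2 ≤ n) {s : ℕ} (hs : s ∈ Icc 1 (π n)) :
    gridDeg n π (n, s) =
      (if 2 ≤ s then 1 else 0) + (if s + 1 ≤ π n then 1 else 0) +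
        (if s ≤ π (n - 1) then 1 else 0) := by
  rw [gridDeg_eq ⟨by omega, le_rfl, (mem_Icc.1 hs).1, (mem_Icc.1 hs).2⟩]
  simp [hn]

end

theorem card_filter_deg_eq_one_of_exterior {a b : ℕ} (hb : 1 ≤ b) (d : ℕ → ℕ)
    (hd : ∀ s ∈ Icc 1 a,
      d s = (if 2 ≤ s then 1 else 0) + (if s + 1 ≤ a then 1 else 0) + (if s ≤ b then 1 else 0)) :
    ((Icc 1 a).filter (fun s => d s = 1)).card =
      (if a = 1 then 1 else 0) + (if b < a then 1 else 0) := by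
  have hfilter : (Icc 1 a).filter (fun s => d s = 1) =
      (Icc 1 a).filter (fun s => (s = 1 ∧ a = 1) ∨ (s = a ∧ b < a)) := by
    refine filter_congr fun s hs => ?_
    rw [hd s hs]
    rw [mem_Icc] at hs
    split_ifs <;> omega
  rw [hfilter]
  split_ifs with ha hba hba
  · omega
  · exact card_eq_one.2 ⟨1, by ext; simp only [mem_filter, mem_Icc, mem_singleton]; omega⟩
  · exact card_eq_one.2 ⟨a, by ext; simp only [mem_filter, mem_Icc, mem_singleton]; omega⟩
  · exact card_eq_zero.2 (filter_eq_empty_iff.2 fun s hs => by rw [mem_Icc] at hs; omega)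

/-- Count of degree-1 vertices in the first and last columns of `G_π`. -/
theorem grid_deg1_external_columns (n : ℕ) (π : ℕ → ℕ) (hn : 2 ≤ n) (hπ : IsPermOn n π) :
    ((Finset.Icc 1 (π 1)).filter (fun s => gridDeg n π (1, s) = 1)).card =
      (if π 1 = 1 then 1 else 0) + (if π 2 < π 1 then 1 else 0) ∧
    ((Finset.Icc 1 (π n)).filter (fun s => gridDeg n π (n, s) = 1)).card =
      (if π n = 1 then 1 else 0) + (if π (n - 1) < π n then 1 else 0) := by
  have hpos : ∀ i, 1 ≤ i → i ≤ n → 1 ≤ π i := fun i hi hin => (hπ.mapsTo ⟨hi, hin⟩).1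
  exact ⟨card_filter_deg_eq_one_of_exterior (hpos 2 one_le_two hn) _
      fun s hs => gridDeg_first_column hn hs,
    card_filter_deg_eq_one_of_exterior (hpos (n - 1) (by omega) (by omega)) _
      fun s hs => gridDeg_last_column hn hs⟩
end

section
/- The number of 213-avoiding permutations of [n] equals the nth Catalan number C_n = (1/(n+1))·binomial(2n, n). -/
/-!
Split a 213-avoiding arrangement `l` of distinct values at its minimum `m`, `l = X ++ m :: Y`.
Every entry of `Y` lies below every entry of `X` (otherwise `x, m, z` is a 213), and `X`, `Y`
avoid 213; conversely any such concatenation avoids 213. Hence `X` and `Y` are arbitrary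
213-avoiding arrangements of the top `i` and bottom `j` remaining values, which gives the
Catalan recursion `C (n + 1) = ∑_{i + j = n} C i * C j`.
-/

/-- `σ` contains the pattern 213. -/
def Contains213 {n : ℕ} (σ : Equiv.Perm (Fin n)) : Prop :=
  ∃ p q r : Fin n, p < q ∧ q < r ∧ σ q < σ p ∧ σ p < σ r

/-- `σ` contains the pattern 312. -/
def Contains312 {n : ℕ} (σ : Equiv.Perm (Fin n)) : Prop :=
  ∃ p q r : Fin n, p < q ∧ q < r ∧ σ q < σ r ∧ σ r < σ p

open Classical in
/-- The finset of 213-avoiding permutations of `[n]`. -/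
noncomputable def Av213 (n : ℕ) : Finset (Equiv.Perm (Fin n)) :=
  Finset.univ.filter (fun σ => ¬ Contains213 σ)

/-- The 1-based column-height function of `σ`: position `t ∈ {1,…,n}` has
height `σ(t) ∈ {1,…,n}`. -/
def colH (n : ℕ) (σ : Equiv.Perm (Fin n)) (t : ℕ) : ℕ :=
  if h : 1 ≤ t ∧ t ≤ n then (σ ⟨t - 1, by omega⟩ : ℕ) + 1 else 0

namespace List

variable {α : Type*}

def Contains213 [LT α] (l : List α) : Prop :=
  ∃ x y z, y < x ∧ x < z ∧ [x, y, z] <+ l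

theorem triple_sublist_iff {l : List α} {x y z : α} :
    [x, y, z] <+ l ↔
      ∃ p q r : Fin l.length, p < q ∧ q < r ∧ l[p] = x ∧ l[q] = y ∧ l[r] = z := by
  rw [sublist_iff_exists_fin_orderEmbedding_get_eq]
  constructor
  · rintro ⟨f, hf⟩
    exact ⟨f 0, f 1, f 2, f.lt_iff_lt.2 (show (0 : Fin 3) < 1 by decide),
      f.lt_iff_lt.2 (show (1 : Fin 3) < 2 by decide), (hf 0).symm, (hf 1).symm, (hf 2).symm⟩
  · rintro ⟨p, q, r, hpq, hqr, rfl, rfl, rfl⟩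
    refine ⟨OrderEmbedding.ofStrictMono ![p, q, r] ?_, ?_⟩
    · exact Fin.strictMono_iff_lt_succ.2 (by simp [Fin.forall_fin_two, hpq, hqr])
    · intro i
      fin_cases i <;> rfl

theorem contains213_append_cons_iff [Preorder α] {X Y : List α} {m : α}
    (hm : ∀ x ∈ X ++ Y, m < x) :
    (X ++ m :: Y).Contains213 ↔
      X.Contains213 ∨ Y.Contains213 ∨ ∃ x ∈ X, ∃ z ∈ Y, x < z := by
  simp only [mem_append] at hm
  constructor
  · rintro ⟨x, y, z, hyx, hxz, h⟩
    obtain ⟨u, v, huv, hu, hv⟩ := sublist_append_iff.mp h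
    have hcross : x ∈ X → z ∈ v →
        X.Contains213 ∨ Y.Contains213 ∨ ∃ x ∈ X, ∃ z ∈ Y, x < z := fun hx hz => by
      rcases mem_cons.mp (hv.subset hz) with rfl | hz
      · exact absurd (hm x (.inl hx)) hxz.not_gt
      · exact .inr (.inr ⟨x, hx, z, hz, hxz⟩)
    rcases u with _ | ⟨a, _ | ⟨b, _ | ⟨c, _ | _⟩⟩⟩ <;>
      simp only [nil_append, cons_append, cons.injEq, reduceCtorEq, and_false] at huv
    · subst huv
      rcases sublist_cons_iff.mp hv with hY | ⟨r, hr, hrY⟩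
      · exact .inr (.inl ⟨x, y, z, hyx, hxz, hY⟩)
      · obtain ⟨rfl, rfl⟩ := cons.inj hr
        exact absurd (hm y (.inr (hrY.subset mem_cons_self))) hyx.not_gt
    · obtain ⟨rfl, rfl⟩ := huv
      exact hcross (hu.subset mem_cons_self) (by simp)
    · obtain ⟨rfl, rfl, rfl⟩ := huv
      exact hcross (hu.subset mem_cons_self) (by simp)
    · obtain ⟨rfl, rfl, rfl, -⟩ := huv
      exact .inl ⟨x, y, z, hyx, hxz, hu⟩
  · rintro (⟨x, y, z, hyx, hxz, h⟩ | ⟨x, y, z, hyx, hxz, h⟩ | ⟨x, hx, z, hz, hxz⟩)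
    · exact ⟨x, y, z, hyx, hxz, h.trans (sublist_append_left _ _)⟩
    · exact ⟨x, y, z, hyx, hxz, (h.cons m).trans (sublist_append_right _ _)⟩
    · refine ⟨x, m, z, hm x (.inl hx), hxz, ?_⟩
      exact singleton_append ▸
        (singleton_sublist.2 hx).append (cons_sublist_cons.2 (singleton_sublist.2 hz))

theorem not_contains213_append_cons_iff [LinearOrder α] {X Y : List α} {m : α}
    (hm : ∀ x ∈ X ++ Y, m < x) :
    ¬(X ++ m :: Y).Contains213 ↔
      ¬X.Contains213 ∧ ¬Y.Contains213 ∧ ∀ y ∈ Y, ∀ x ∈ X, y ≤ x := by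
  rw [contains213_append_cons_iff hm]
  grind

theorem perm_and_perm_of_append_perm_sortedLE [LinearOrder α] {X Y L₁ L₂ : List α}
    (hL : (L₁ ++ L₂).SortedLE) (h : Y ++ X ~ L₁ ++ L₂) (hlen : Y.length = L₁.length)
    (hYX : ∀ y ∈ Y, ∀ x ∈ X, y ≤ x) : Y ~ L₁ ∧ X ~ L₂ := by
  have hY := mergeSort_perm Y (· ≤ ·)
  have hX := mergeSort_perm X (· ≤ ·)
  have hsorted : (Y.mergeSort (· ≤ ·) ++ X.mergeSort (· ≤ ·)).SortedLE :=
    (pairwise_append.2 ⟨sortedLE_mergeSort.pairwise, sortedLE_mergeSort.pairwise,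
      fun y hy x hx => hYX y (hY.subset hy) x (hX.subset hx)⟩).sortedLE
  obtain ⟨hY', hX'⟩ :=
    append_inj (((hY.append hX).trans h).eq_of_sortedLE hsorted hL) (by simp [hlen])
  exact ⟨hY' ▸ hY.symm, hX' ▸ hX.symm⟩

section Avoiders

variable [LinearOrder α]

open Classical in
noncomputable def avoiders213 (L : List α) : Finset (List α) :=
  L.permutations.toFinset.filter fun l => ¬l.Contains213

theorem mem_avoiders213 {L l : List α} : l ∈ avoiders213 L ↔ l ~ L ∧ ¬l.Contains213 := by
  simp [avoiders213, mem_permutations]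

theorem avoiders213_nil : avoiders213 ([] : List α) = {[]} := by
  ext l
  simp +contextual [mem_avoiders213, Contains213]

open Finset in
theorem card_avoiders213_cons {m : α} {L : List α} (h : (m :: L).SortedLT) :
    (avoiders213 (m :: L)).card =
      ((antidiagonal L.length).sigma fun ij =>
        avoiders213 (L.drop ij.2) ×ˢ avoiders213 (L.take ij.2)).card := by
  have hm : ∀ x ∈ L, m < x := (pairwise_cons.1 h.pairwise).1
  have hL : L.SortedLE := (pairwise_cons.1 h.sortedLE.pairwise).2.sortedLE
  symm
  refine card_bij (fun x _ => x.2.1 ++ m :: x.2.2) ?_ ?_ ?_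
  · rintro ⟨⟨i, j⟩, X, Y⟩ hx
    simp only [Finset.mem_sigma, HasAntidiagonal.mem_antidiagonal, Finset.mem_product,
      mem_avoiders213] at hx
    obtain ⟨-, ⟨hX, hXa⟩, hY, hYa⟩ := hx
    have hXY : X ++ Y ~ L := by
      simpa only [take_append_drop] using perm_append_comm.trans (hY.append hX)
    refine mem_avoiders213.2 ⟨perm_middle.trans (hXY.cons m),
      (not_contains213_append_cons_iff fun x hx => hm x (hXY.subset hx)).2 ⟨hXa, hYa, ?_⟩⟩
    intro y hy x hx
    rw [← take_append_drop j L] at hL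
    exact (pairwise_append.1 hL.pairwise).2.2 y (hY.subset hy) x (hX.subset hx)
  · rintro ⟨⟨i, j⟩, X, Y⟩ hx ⟨⟨i', j'⟩, X', Y'⟩ hx' heq
    simp only [Finset.mem_sigma, HasAntidiagonal.mem_antidiagonal, Finset.mem_product,
      mem_avoiders213] at hx hx'
    obtain ⟨hij, ⟨hX, -⟩, hY, -⟩ := hx
    obtain ⟨hij', -, hY', -⟩ := hx'
    have hmX : m ∉ X := fun hmX => (hm m (mem_of_mem_drop (hX.subset hmX))).false
    have hmY : m ∉ Y := fun hmY => (hm m (mem_of_mem_take (hY.subset hmY))).false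
    obtain ⟨rfl, -, rfl⟩ := (append_cons_inj_of_notMem hmX hmY).1 heq
    have hj : j = j' := by
      have := hY.length_eq.symm.trans hY'.length_eq
      simp only [length_take] at this
      omega
    obtain ⟨rfl, rfl⟩ : j = j' ∧ i = i' := ⟨hj, by omega⟩
    rfl
  · intro l hl
    obtain ⟨hperm, havoid⟩ := mem_avoiders213.1 hl
    obtain ⟨X, Y, rfl⟩ := append_of_mem (hperm.symm.subset mem_cons_self)
    have hXY : X ++ Y ~ L := (perm_cons m).1 (perm_middle.symm.trans hperm)
    obtain ⟨hXa, hYa, hYX⟩ :=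
      (not_contains213_append_cons_iff fun x hx => hm x (hXY.subset hx)).1 havoid
    have hlen : X.length + Y.length = L.length := by simpa using hXY.length_eq
    obtain ⟨hY, hX⟩ := perm_and_perm_of_append_perm_sortedLE
      (L₁ := L.take Y.length) (L₂ := L.drop Y.length) (by rwa [take_append_drop])
      (by rw [take_append_drop]; exact perm_append_comm.trans hXY) (by simp; omega) hYX
    exact ⟨⟨(X.length, Y.length), X, Y⟩, by simp [mem_avoiders213, *], rfl⟩

open Finset in
theorem card_avoiders213 {L : List α} (h : L.SortedLT) :
    (avoiders213 L).card = catalan L.length := by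
  induction hn : L.length using Nat.strong_induction_on generalizing L with
  | _ n ih =>
  rcases L with _ | ⟨m, L⟩
  · subst hn
    simp [avoiders213_nil]
  · subst hn
    have hsorted {L'} (hL' : L' <+ L) : L'.SortedLT :=
      (h.pairwise.sublist (hL'.cons m)).sortedLT
    rw [card_avoiders213_cons h, card_sigma, length_cons, catalan_succ']
    refine sum_congr rfl fun ij hij => ?_
    rw [HasAntidiagonal.mem_antidiagonal] at hij
    rw [card_product, ih _ (by simp) (hsorted (drop_sublist _ _)) rfl,
      ih _ (by simp) (hsorted (take_sublist _ _)) rfl]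
    simp only [length_drop, length_take]
    congr 2 <;> omega

end Avoiders

end List

theorem contains213_iff_contains213_ofFn {n : ℕ} (σ : Equiv.Perm (Fin n)) :
    Contains213 σ ↔ (List.ofFn σ).Contains213 := by
  simp only [Contains213, List.Contains213, List.triple_sublist_iff, Fin.getElem_fin,
    List.getElem_ofFn]
  constructor
  · rintro ⟨p, q, r, hpq, hqr, h1, h2⟩
    exact ⟨σ p, σ q, σ r, h1, h2, p.cast List.length_ofFn.symm, q.cast List.length_ofFn.symm,
      r.cast List.length_ofFn.symm, hpq, hqr, by simp, by simp, by simp⟩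
  · rintro ⟨-, -, -, h1, h2, p, q, r, hpq, hqr, rfl, rfl, rfl⟩
    exact ⟨p.cast List.length_ofFn, q.cast List.length_ofFn, r.cast List.length_ofFn,
      hpq, hqr, h1, h2⟩

theorem card_Av213_eq_card_avoiders213 (n : ℕ) :
    (Av213 n).card = (List.finRange n).avoiders213.card := by
  refine Finset.card_bij (fun σ _ => List.ofFn σ) ?_ ?_ ?_
  · intro σ hσ
    simp only [Av213, Finset.mem_filter, Finset.mem_univ, true_and] at hσ
    rw [List.mem_avoiders213, ← contains213_iff_contains213_ofFn]
    refine ⟨(List.perm_ext_iff_of_nodup (List.nodup_ofFn.2 σ.injective)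
      (List.nodup_finRange n)).2 fun a => by simpa using σ.surjective a, hσ⟩
  · intro σ _ τ _ h
    exact Equiv.ext (congrFun (List.ofFn_injective h))
  · intro l hl
    obtain ⟨hperm, havoid⟩ := List.mem_avoiders213.1 hl
    have hlen : l.length = n := by simpa using hperm.length_eq
    let σ : Equiv.Perm (Fin n) := (finCongr hlen.symm).trans
      ((hperm.nodup_iff.2 (List.nodup_finRange n)).getEquivOfForallMemList l
        fun x => hperm.mem_iff.2 (List.mem_finRange x))
    have hσ : List.ofFn σ = l := List.ext_getElem (by simp [hlen]) (by simp [σ])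
    refine ⟨σ, ?_, hσ⟩
    simpa [Av213, contains213_iff_contains213_ofFn, hσ] using havoid

/-- The number of 213-avoiding permutations of `[n]` is the `n`th Catalan
number `(1/(n+1))·C(2n,n)`. -/
theorem card_Av213_eq_catalan (n : ℕ) :
    (Av213 n).card = Nat.choose (2 * n) n / (n + 1) := by
  rw [card_Av213_eq_card_avoiders213, List.card_avoiders213 (List.sortedLT_finRange n),
    List.length_finRange, catalan_eq_centralBinom_div, Nat.centralBinom_eq_two_mul_choose]
end

section
/- Let π ∈ Av_n(213) decompose as π = (α + j + 1) 1 (β + 1) where α ∈ Av_i(213), β ∈ Av_j(213), i + j = n − 1, α + j + 1 means adding j+1 to each entry of α, and β + 1 means adding 1 to each entry of β. Then H(π) = H(α) + H(β) + 𝟙{i≥2}(i−1)(j+1) + 𝟙{j≥2}(j−1) + 𝟙{i≥1} + 𝟙{j≥1}, where H(σ) = Σ_{t=1}^{|σ|−1} min{σ(t), σ(t+1)}. -/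
/-- `π` is a 213-avoiding permutation of `[n]` (in the `ℕ → ℕ` model). -/
def Avoids213On (n : ℕ) (π : ℕ → ℕ) : Prop :=
  IsPermOn n π ∧
    ¬ ∃ p q r, 1 ≤ p ∧ p < q ∧ q < r ∧ r ≤ n ∧ π q < π p ∧ π p < π r


/-! `H` is additive over a concatenation up to the one adjacent pair across the seam.
Cut `(α + j + 1) 1 (β + 1)` at both sides of the entry `1`: within a block the adjacent minima
are those of `α` (resp. `β`) raised by `j + 1` (resp. `1`), giving `(i - 1)(j + 1)` and `j - 1`,
and each seam that exists has minimum `1`. -/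

lemma Hstat_congr {n : ℕ} {f g : ℕ → ℕ} (h : ∀ t, 1 ≤ t → t ≤ n → f t = g t) :
    Hstat n f = Hstat n g := by
  unfold Hstat
  refine Finset.sum_congr rfl fun t ht => ?_
  rw [Finset.mem_Icc] at ht
  rw [h t ht.1 (by omega), h (t + 1) (by omega) (by omega)]

lemma Hstat_add_const (n c : ℕ) (f : ℕ → ℕ) :
    Hstat n (fun t => f t + c) = Hstat n f + (n - 1) * c := by
  simp only [Hstat, min_add_add_right, Finset.sum_add_distrib, Finset.sum_const, Nat.card_Icc,
    smul_eq_mul, Nat.add_sub_cancel]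

lemma Hstat_succ (n : ℕ) (f : ℕ → ℕ) :
    Hstat (n + 1) f = Hstat n f + if 1 ≤ n then min (f n) (f (n + 1)) else 0 := by
  cases n with
  | zero => simp [Hstat]
  | succ n =>
    simp only [Hstat, Nat.add_sub_cancel, le_add_iff_nonneg_left, zero_le, if_true]
    exact Finset.sum_Icc_succ_top (by omega) _

lemma Hstat_append (m n : ℕ) (f : ℕ → ℕ) :
    Hstat (m + n) f = Hstat m f + Hstat n (fun t => f (m + t)) +
      if 1 ≤ m ∧ 1 ≤ n then min (f m) (f (m + 1)) else 0 := by
  induction n with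
  | zero => simp [Hstat]
  | succ n ih =>
    rw [← add_assoc, Hstat_succ, ih, Hstat_succ]
    rcases Nat.eq_zero_or_pos n with rfl | hn
    · simp
    · simp only [show 1 ≤ m + n by omega, Nat.one_le_iff_ne_zero.mpr hn.ne', and_true, if_true,
        ← add_assoc]
      split_ifs <;> omega

theorem Hstat_glue_general (i j : ℕ) (α β : ℕ → ℕ) :
    Hstat (i + j + 1)
        (fun t => if t ≤ i then α t + (j + 1)
                  else if t = i + 1 then 1
                  else β (t - (i + 1)) + 1) =
      Hstat i α + Hstat j β +
        (if 2 ≤ i then (i - 1) * (j + 1) else 0) +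
        (if 2 ≤ j then j - 1 else 0) +
        (if 1 ≤ i then 1 else 0) + (if 1 ≤ j then 1 else 0) := by
  set π : ℕ → ℕ := fun t => if t ≤ i then α t + (j + 1)
    else if t = i + 1 then 1 else β (t - (i + 1)) + 1
  have left_block : Hstat i π = Hstat i α + (i - 1) * (j + 1) := by
    rw [Hstat_congr (g := fun t => α t + (j + 1)) fun t _ ht => if_pos ht, Hstat_add_const]
  have right_block : Hstat j (fun t => π (i + 1 + t)) = Hstat j β + (j - 1) := by
    have shifted : ∀ t, 1 ≤ t → t ≤ j → π (i + 1 + t) = β t + 1 := fun t ht _ => by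
      simp [π, show t ≠ 0 by omega, show ¬ i + 1 + t ≤ i by omega]
    rw [Hstat_congr shifted, Hstat_add_const, mul_one]
  have first_seam : min (π i) (π (i + 1)) = 1 := by simp [π]; omega
  have second_seam : min (π (i + 1)) (π (i + 1 + 1)) = 1 := by simp [π]
  rw [Nat.add_right_comm, Hstat_append, Hstat_succ, left_block, right_block, first_seam,
    second_seam]
  have corner : (if 2 ≤ i then (i - 1) * (j + 1) else 0) = (i - 1) * (j + 1) := by
    split_ifs
    · rfl
    · rw [show i - 1 = 0 by omega, zero_mul]
  rw [corner]
  split_ifs <;> omega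

/-- Gluing identity for the horizontal statistic `H` under the Catalan
decomposition `π = (α + j + 1) 1 (β + 1)`. -/
theorem Hstat_glue (i j : ℕ) (α β : ℕ → ℕ)
    (hα : Avoids213On i α) (hβ : Avoids213On j β) :
    Hstat (i + j + 1)
        (fun t => if t ≤ i then α t + (j + 1)
                  else if t = i + 1 then 1
                  else β (t - (i + 1)) + 1) =
      Hstat i α + Hstat j β +
        (if 2 ≤ i then (i - 1) * (j + 1) else 0) +
        (if 2 ≤ j then j - 1 else 0) +
        (if 1 ≤ i then 1 else 0) + (if 1 ≤ j then 1 else 0) :=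
  Hstat_glue_general i j α β
end
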